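/- arXiv:1704.05382 — 4 statements merged into one kernel-verified Lean document; each statement's English description precedes it below -/
import Mathlib

section
/- Let p be a prime, let k be a field, and suppose that the characteristic of k does not divide p−1. Let a : ℕ → k be the p-pertinent sequence, i.e. a(n) = 0 if p ∣ n and a(n) = 1 otherwise. Then (1) a satisfies the polynomial x^p − 1, i.e. a(n+p) = a(n) for all n; and (2) a does not satisfy any nonzero polynomial of degree strictly less than p, i.e. for every nonzero polynomial f = Σ_{i=0}^{m} f_i x^i in k[x] with m < p there exists n with Σ_{i=0}^{m} f_i · a(n+i) ≠ 0. Consequently the minimal polynomial of the p-pertinent sequence is x^p − 1. -/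
/-!
Suppose `∑_{j ≤ m} c j * a (n + j) = 0` for all `n`, with `m < p`, and put `T = ∑_{j ≤ m} c j`.
A window `n, …, n + m` of length at most `p` contains at most one multiple of `p`, and it can be
placed anywhere: putting it at position `i` gives `T - c i = 0`, so all coefficients equal `T`.
If `m + 1 < p` some window contains no multiple of `p`, giving `T = 0`; if `m + 1 = p` then
`T = p • T`, i.e. `(p - 1) • T = 0`, and `T = 0` because the characteristic does not divide `p - 1`.
-/

open Finset

def pertinentSeq (R : Type*) [Zero R] [One R] (p n : ℕ) : R := if p ∣ n then 0 else 1

section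

variable {R : Type*} {p m : ℕ}

theorem pertinentSeq_add_self [Zero R] [One R] (n : ℕ) :
    pertinentSeq R p (n + p) = pertinentSeq R p n := by
  simp only [pertinentSeq, Nat.dvd_add_self_right]

theorem Nat.dvd_sub_add_iff_eq {i j : ℕ} (hi : i < p) (hj : j < p) : p ∣ p - i + j ↔ j = i := by
  refine ⟨fun h => ?_, fun h => ⟨1, by omega⟩⟩
  rcases le_or_gt i j with hij | hij
  · rw [show p - i + j = j - i + p by omega, Nat.dvd_add_self_right] at h
    have := Nat.eq_zero_of_dvd_of_lt h (by omega)
    omega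
  · exact absurd h (Nat.not_dvd_of_pos_of_lt (by omega) (by omega))

theorem sum_mul_pertinentSeq_one_add [NonAssocSemiring R] (c : ℕ → R) (hm : m + 1 < p) :
    ∑ j ∈ range (m + 1), c j * pertinentSeq R p (1 + j) = ∑ j ∈ range (m + 1), c j := by
  refine sum_congr rfl fun j hj => ?_
  rw [pertinentSeq, if_neg (Nat.not_dvd_of_pos_of_lt (by omega) (by grind)), mul_one]

variable [Ring R] (c : ℕ → R)

theorem sum_mul_pertinentSeq_sub_add {i : ℕ} (hi : i ≤ m) (hm : m < p) :
    ∑ j ∈ range (m + 1), c j * pertinentSeq R p (p - i + j) =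
      ∑ j ∈ range (m + 1), c j - c i := by
  have hterm : ∀ j ∈ range (m + 1),
      c j * pertinentSeq R p (p - i + j) = c j - if j = i then c j else 0 := by
    intro j hj
    simp only [pertinentSeq, Nat.dvd_sub_add_iff_eq (hi.trans_lt hm) (by grind : j < p)]
    split_ifs <;> simp
  rw [sum_congr rfl hterm, sum_sub_distrib, sum_ite_eq', if_pos (mem_range_succ_iff.2 hi)]

theorem eq_zero_of_forall_sum_mul_pertinentSeq_eq_zero [NoZeroDivisors R]
    (hchar : ¬ ringChar R ∣ p - 1) (hm : m < p)
    (h : ∀ n, ∑ j ∈ range (m + 1), c j * pertinentSeq R p (n + j) = 0) {i : ℕ} (hi : i ≤ m) :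
    c i = 0 := by
  set T := ∑ j ∈ range (m + 1), c j
  have hcoeff : ∀ i ≤ m, c i = T := fun i hi =>
    (sub_eq_zero.1 ((sum_mul_pertinentSeq_sub_add c hi hm).symm.trans (h _))).symm
  suffices hT : T = 0 by rw [hcoeff i hi, hT]
  rcases (Nat.succ_le_of_lt hm).lt_or_eq with hlt | rfl
  · exact (sum_mul_pertinentSeq_one_add c hlt).symm.trans (h 1)
  · have hT : T = m • T + T := calc
      T = ∑ _j ∈ range (m + 1), T := sum_congr rfl fun j hj => hcoeff j (mem_range_succ_iff.1 hj)
      _ = m • T + T := by rw [sum_const, card_range, succ_nsmul]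
    have hm0 : (m : R) ≠ 0 := fun h0 => hchar ((ringChar.spec R m).1 h0)
    rw [right_eq_add, nsmul_eq_mul] at hT
    exact (mul_eq_zero.1 hT).resolve_left hm0

end

theorem p_pertinent_minimal_poly_char_not_dvd_general
    (p : ℕ) (k : Type*) [Field k]
    (hchar : ¬ (ringChar k ∣ p - 1))
    (a : ℕ → k) (ha : ∀ n : ℕ, a n = if p ∣ n then 0 else 1) :
    (∀ n : ℕ, a (n + p) = a n) ∧
    (∀ f : Polynomial k, f ≠ 0 → f.natDegree < p →
      ∃ n : ℕ, ∑ i ∈ Finset.range (f.natDegree + 1), f.coeff i * a (n + i) ≠ 0) := by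
  obtain rfl : a = pertinentSeq k p := funext ha
  refine ⟨pertinentSeq_add_self, fun f hf hdeg => ?_⟩
  by_contra! hsum
  exact hf (Polynomial.leadingCoeff_eq_zero.1
    (eq_zero_of_forall_sum_mul_pertinentSeq_eq_zero f.coeff hchar hdeg hsum le_rfl))

/-- Let `p` be a prime, `k` a field whose characteristic does not divide
`p - 1`, and let `a : ℕ → k` be the `p`-pertinent sequence (`a n = 0` if `p ∣ n`, `a n = 1`
otherwise).  Then `a` satisfies the polynomial `x^p - 1` (i.e. `a (n + p) = a n` for all `n`),
and `a` satisfies no nonzero polynomial of degree strictly less than `p`; hence the minimal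
polynomial of the `p`-pertinent sequence is `x^p - 1`. -/
theorem p_pertinent_minimal_poly_char_not_dvd
    (p : ℕ) (hp : p.Prime) (k : Type*) [Field k]
    (hchar : ¬ (ringChar k ∣ p - 1))
    (a : ℕ → k) (ha : ∀ n : ℕ, a n = if p ∣ n then 0 else 1) :
    (∀ n : ℕ, a (n + p) = a n) ∧
    (∀ f : Polynomial k, f ≠ 0 → f.natDegree < p →
      ∃ n : ℕ, ∑ i ∈ Finset.range (f.natDegree + 1), f.coeff i * a (n + i) ≠ 0) :=
  p_pertinent_minimal_poly_char_not_dvd_general p k hchar a ha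
end

section
/- Let p be a prime and let n ≥ 1 be an integer. Then, working modulo p, Σ_{j=1}^{p−1} (−1)^{j+1} · C(n,j) ≡ 0 (mod p) if p divides n, and Σ_{j=1}^{p−1} (−1)^{j+1} · C(n,j) ≡ 1 (mod p) if p does not divide n. Equivalently, setting b_0 = 0, b_j = (−1)^{j+1} for 1 ≤ j ≤ p−1, and b_j = 0 for j ≥ p, the sequence B_n = Σ_{j=0}^{n} C(n,j) b_j, taken modulo p, is the p-pertinent sequence. -/
/-! By Lucas' theorem, `C(n, j) ≡ C(n % p, j) [MOD p]` for `j < p`, and for `r < p` the sum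
`∑_{j=1}^{p-1} (-1)^(j+1) C(r, j)` is `1 - (1 - 1)^r`. -/

open Finset

theorem ZMod.natCast_choose_eq_natCast_choose_mod {p : ℕ} [Fact p.Prime] (n : ℕ) {j : ℕ}
    (hj : j < p) : (n.choose j : ZMod p) = ((n % p).choose j : ZMod p) := by
  have lucas := Choose.choose_modEq_choose_mod_mul_choose_div_nat (n := n) (k := j) (p := p)
  rw [Nat.mod_eq_of_lt hj, Nat.div_eq_of_lt hj, Nat.choose_zero_right, mul_one] at lucas
  exact (ZMod.natCast_eq_natCast_iff _ _ _).mpr lucas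

theorem sum_range_neg_one_pow_mul_choose_of_lt {R : Type*} [CommRing R] {r m : ℕ} (hrm : r < m) :
    ∑ j ∈ range m, (-1 : R) ^ j * r.choose j = if r = 0 then 1 else 0 := by
  have vanish : ∑ j ∈ Ico (r + 1) m, (-1 : R) ^ j * r.choose j = 0 :=
    sum_eq_zero fun j hj ↦ by
      rw [Nat.choose_eq_zero_of_lt (mem_Ico.1 hj).1, Nat.cast_zero, mul_zero]
  rw [← sum_range_add_sum_Ico _ hrm, vanish, add_zero, Nat.succ_eq_add_one]
  simpa [← zero_pow_eq] using (add_pow (-1 : R) 1 r).symm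

theorem sum_Ico_one_neg_one_pow_succ_mul_choose_of_lt {R : Type*} [CommRing R] {r m : ℕ}
    (hrm : r < m) :
    ∑ j ∈ Ico 1 m, (-1 : R) ^ (j + 1) * r.choose j = if r = 0 then 0 else 1 := by
  have full := sum_range_neg_one_pow_mul_choose_of_lt (R := R) hrm
  rw [range_eq_Ico, sum_eq_sum_Ico_succ_bot (by omega), pow_zero, Nat.choose_zero_right,
    Nat.cast_one, one_mul, zero_add] at full
  simp only [pow_succ, mul_neg_one, neg_mul, sum_neg_distrib]
  split_ifs at full ⊢ <;> linear_combination -full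

theorem alternating_binomial_sum_p_pertinent_general
    (p : ℕ) (hp : p.Prime) (n : ℕ) :
    (∑ j ∈ Finset.Ico 1 p, (-1 : ZMod p) ^ (j + 1) * (n.choose j : ZMod p)) =
      if p ∣ n then 0 else 1 := by
  have : Fact p.Prime := ⟨hp⟩
  rw [sum_congr rfl fun j hj ↦ by
      rw [ZMod.natCast_choose_eq_natCast_choose_mod n (mem_Ico.1 hj).2],
    sum_Ico_one_neg_one_pow_succ_mul_choose_of_lt (Nat.mod_lt n hp.pos)]
  simp only [Nat.dvd_iff_mod_eq_zero]

/-- For a prime `p` and `n ≥ 1`, working modulo `p`,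
`∑_{j=1}^{p-1} (-1)^(j+1) * C(n, j)` is `0` if `p ∣ n` and `1` otherwise; i.e. the sequence
`B_n = ∑_{j=0}^{n} C(n, j) b_j` (with `b_0 = 0`, `b_j = (-1)^(j+1)` for `1 ≤ j ≤ p - 1`,
`b_j = 0` for `j ≥ p`), taken modulo `p`, is the `p`-pertinent sequence. -/
theorem alternating_binomial_sum_p_pertinent
    (p : ℕ) (hp : p.Prime) (n : ℕ) (hn : 1 ≤ n) :
    (∑ j ∈ Finset.Ico 1 p, (-1 : ZMod p) ^ (j + 1) * (n.choose j : ZMod p)) =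
      if p ∣ n then 0 else 1 :=
  alternating_binomial_sum_p_pertinent_general p hp n
end

section
/- Let H be a finite-dimensional Hopf algebra over a field k, with antipode S and Sweedler power maps P^{(n)}. Then there exists a nonzero polynomial f = Σ_{i=0}^{m} f_i x^i ∈ k[x] with m ≤ (dim_k H)^2 and with nonzero constant coefficient f_0 ≠ 0, such that Σ_{i=0}^{m} f_i · Tr(S ∘ P^{(n+i)}) = 0 for all n ∈ ℕ. In particular, the sequence of indicators {ν_n(H)}_{n≥1} is linearly recursive and the degree of its minimal polynomial is at most (dim_k H)^2. -/
open scoped TensorProduct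

/-- The Sweedler power maps `P^(n) : H →ₗ[k] H` of a bialgebra: convolution powers of the
identity, defined by `P^(0) = u ∘ ε` and `P^(n+1) = m ∘ (P^(n) ⊗ id) ∘ Δ`. -/
noncomputable def sweedlerPower (k H : Type*) [CommSemiring k] [Semiring H]
    [Bialgebra k H] : ℕ → H →ₗ[k] H
  | 0 => (Algebra.linearMap k H) ∘ₗ (Coalgebra.counit : H →ₗ[k] k)
  | n + 1 => (LinearMap.mul' k H) ∘ₗ
      (TensorProduct.map (sweedlerPower k H n) LinearMap.id) ∘ₗ
      (Coalgebra.comul : H →ₗ[k] H ⊗[k] H)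

/-!
The identity is a unit of the convolution algebra `End_k(H)`, with inverse the antipode, and
`P^(n)` is its `n`-th convolution power. In a finite-dimensional algebra `A` a unit `a` is
annihilated by the characteristic polynomial of left multiplication by `a`, which has degree
`dim A` and constant term `± det(a·) ≠ 0`. Multiplying that relation by `a^n` and applying the
functional `g ↦ Tr(S ∘ g)` gives the recursion, since `dim End_k(H) = (dim H)^2`.
-/

open Polynomial WithConv

theorem Polynomial.sum_coeff_smul_pow_add_eq_zero {R A : Type*} [CommSemiring R] [Semiring A]
    [Algebra R A] {a : A} {f : R[X]} (hf : aeval a f = 0) (n : ℕ) :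
    ∑ i ∈ Finset.range (f.natDegree + 1), f.coeff i • a ^ (n + i) = 0 := by
  have : a ^ n * aeval a f = 0 := by rw [hf, mul_zero]
  rw [aeval_eq_sum_range, Finset.mul_sum] at this
  simpa only [mul_smul_comm, pow_add] using this

theorem IsUnit.exists_aeval_eq_zero_coeff_zero_ne_zero (k : Type*) {A : Type*} [Field k]
    [Ring A] [Algebra k A] [FiniteDimensional k A] {a : A} (ha : IsUnit a) :
    ∃ f : k[X], f ≠ 0 ∧ f.natDegree ≤ Module.finrank k A ∧ f.coeff 0 ≠ 0 ∧ aeval a f = 0 := by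
  set La := Algebra.lmul k A a
  have hdet : LinearMap.det La ≠ 0 := ((ha.map (Algebra.lmul k A)).map LinearMap.det).ne_zero
  refine ⟨La.charpoly, La.charpoly_monic.ne_zero, La.charpoly_natDegree.le, fun h0 => ?_, ?_⟩
  · rw [LinearMap.det_eq_sign_charpoly_coeff, h0, mul_zero] at hdet
    exact hdet rfl
  · apply Algebra.lmul_injective (R := k)
    rw [← aeval_algHom_apply, LinearMap.aeval_self_charpoly, map_zero]

instance WithConv.instModuleFinite {R M : Type*} [Semiring R] [AddCommMonoid M] [Module R M]
    [Module.Finite R M] : Module.Finite R (WithConv M) :=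
  Module.Finite.equiv (WithConv.linearEquiv R M).symm

theorem WithConv.finrank_linearMap {k M N : Type*} [Field k] [AddCommGroup M] [Module k M]
    [AddCommGroup N] [Module k N] [FiniteDimensional k M] [FiniteDimensional k N] :
    Module.finrank k (WithConv (M →ₗ[k] N)) = Module.finrank k M * Module.finrank k N := by
  rw [(WithConv.linearEquiv k _).finrank_eq, Module.finrank_linearMap]

section Sweedler

variable (k H : Type*) [CommSemiring k] [Semiring H]

theorem toConv_sweedlerPower [Bialgebra k H] (n : ℕ) :
    toConv (sweedlerPower k H n) = toConv LinearMap.id ^ n := by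
  induction n with
  | zero => rfl
  | succ n ih => rw [pow_succ, ← ih]; rfl

theorem isUnit_toConv_id [HopfAlgebra k H] : IsUnit (toConv (LinearMap.id : H →ₗ[k] H)) :=
  ⟨⟨_, _, LinearMap.id_mul_antipode, LinearMap.antipode_mul_id⟩, rfl⟩

end Sweedler

/-- For a finite-dimensional Hopf algebra `H` over a field `k` there is a
nonzero polynomial `f` of degree at most `(dim_k H)^2` with nonzero constant coefficient such
that `∑ᵢ fᵢ · Tr(S ∘ P^(n+i)) = 0` for all `n`; in particular, the indicator sequence
`ν_n(H) = Tr(S ∘ P^(n-1))` is linearly recursive with minimal polynomial of degree at most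
`(dim_k H)^2`. -/
theorem indicators_linearly_recursive
    (k H : Type*) [Field k] [Ring H] [HopfAlgebra k H] [FiniteDimensional k H] :
    ∃ f : Polynomial k, f ≠ 0 ∧ f.natDegree ≤ (Module.finrank k H) ^ 2 ∧ f.coeff 0 ≠ 0 ∧
      ∀ n : ℕ, ∑ i ∈ Finset.range (f.natDegree + 1),
        f.coeff i *
          LinearMap.trace k H (HopfAlgebra.antipode (R := k) ∘ₗ sweedlerPower k H (n + i)) = 0 := by
  obtain ⟨f, hf0, hdeg, hcoeff, haeval⟩ :=
    (isUnit_toConv_id k H).exists_aeval_eq_zero_coeff_zero_ne_zero k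
  rw [WithConv.finrank_linearMap, ← sq] at hdeg
  refine ⟨f, hf0, hdeg, hcoeff, fun n => ?_⟩
  have hrec :=
    congrArg (LinearMap.trace k H ∘ₗ LinearMap.llcomp k H H H (HopfAlgebra.antipode k))
      (congrArg ofConv (sum_coeff_smul_pow_add_eq_zero haeval n))
  simpa [← toConv_sweedlerPower, LinearMap.llcomp_apply'] using hrec
end

section
/- Let H and H' be finite-dimensional Hopf algebras over a field k, and endow the tensor product H ⊗_k H' with its standard Hopf algebra structure. Then for every integer n ≥ 1, the n-th indicator of the tensor product is the product of the indicators: ν_n(H ⊗_k H') = ν_n(H) · ν_n(H'). -/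
/-!
`P^(n)` is the `n`-th convolution power of the identity. Since convolution of maps
`f ⊗ g` on `H ⊗ H'` is computed factorwise (`TensorProduct.map_convMul_map`), the Sweedler
powers of `H ⊗ H'` are `P_H^(n) ⊗ P_H'^(n)`; composing with `S_H ⊗ S_H'` and using
`Tr (f ⊗ g) = Tr f · Tr g` gives the product formula.
-/

open scoped TensorProduct

open WithConv TensorProduct

section

variable {k A B : Type*} [CommSemiring k] [Semiring A] [Semiring B]
  [Bialgebra k A] [Bialgebra k B]

theorem toConv_sweedlerPower_succ (n : ℕ) :
    toConv (sweedlerPower k A (n + 1)) = toConv (sweedlerPower k A n) * toConv LinearMap.id :=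
  rfl

theorem sweedlerPower_tensorProduct (n : ℕ) :
    sweedlerPower k (A ⊗[k] B) n = map (sweedlerPower k A n) (sweedlerPower k B n) := by
  induction n with
  | zero =>
    ext a b
    simp [sweedlerPower, Algebra.algebraMap_eq_smul_one, Algebra.TensorProduct.one_def,
      smul_tmul', smul_smul, mul_comm]
  | succ n ih =>
    apply toConv_injective
    rw [toConv_sweedlerPower_succ, ih, ← map_id, map_convMul_map]
    rfl

end

theorem indicator_tensorProduct_general
    (k H H' : Type u) [Field k] [Ring H] [Ring H']
    [HopfAlgebra k H] [HopfAlgebra k H']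
    [FiniteDimensional k H] [FiniteDimensional k H'] (n : ℕ) :
    LinearMap.trace k (H ⊗[k] H')
        ((TensorProduct.map (HopfAlgebra.antipode (R := k) (A := H))
            (HopfAlgebra.antipode (R := k) (A := H'))) ∘ₗ
          sweedlerPower k (H ⊗[k] H') (n - 1)) =
      LinearMap.trace k H (HopfAlgebra.antipode (R := k) ∘ₗ sweedlerPower k H (n - 1)) *
        LinearMap.trace k H' (HopfAlgebra.antipode (R := k) ∘ₗ sweedlerPower k H' (n - 1)) := by
  rw [sweedlerPower_tensorProduct, ← map_comp, LinearMap.trace_tensorProduct']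

/-- For finite-dimensional Hopf algebras `H`, `H'` over a field `k`, the
`n`-th indicator of the tensor product Hopf algebra `H ⊗[k] H'` (whose antipode is
`S_H ⊗ S_H'`) is the product of the indicators: `ν_n(H ⊗ H') = ν_n(H) · ν_n(H')` for all
`n ≥ 1`. -/
theorem indicator_tensorProduct
    (k H H' : Type u) [Field k] [Ring H] [Ring H']
    [HopfAlgebra k H] [HopfAlgebra k H']
    [FiniteDimensional k H] [FiniteDimensional k H'] (n : ℕ) (hn : 1 ≤ n) :
    LinearMap.trace k (H ⊗[k] H')
        ((TensorProduct.map (HopfAlgebra.antipode (R := k) (A := H))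
            (HopfAlgebra.antipode (R := k) (A := H'))) ∘ₗ
          sweedlerPower k (H ⊗[k] H') (n - 1)) =
      LinearMap.trace k H (HopfAlgebra.antipode (R := k) ∘ₗ sweedlerPower k H (n - 1)) *
        LinearMap.trace k H' (HopfAlgebra.antipode (R := k) ∘ₗ sweedlerPower k H' (n - 1)) :=
  indicator_tensorProduct_general k H H' n
end
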